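/- (Hoffman type relation for t-qMZVs, depth 1) For 0 < q < 1, a real parameter t, and an integer k ≥ 2, Σ_{j=0}^{k-2} ζ_q^t(k-j, j+1) = (1 + (k-1)t)·ζ_q(k+1) + t(k-1)(1-q)·ζ_q(k). -/

import Mathlib

open scoped BigOperators

/-- The q-integer [m] = (1-q^m)/(1-q). -/
noncomputable def qint (q : ℝ) (m : ℕ) : ℝ := (1 - q ^ m) / (1 - q)

/-- Depth-one q-zeta value ζ_q(k) = Σ_{m≥1} q^{(k-1)m}/[m]^k. -/
noncomputable def zetaQ (q : ℝ) (k : ℕ) : ℝ :=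
  ∑' m : ℕ, q ^ ((k - 1) * (m + 1)) / (qint q (m + 1)) ^ k

/-- Depth-two qMZV: sum over m₁ > m₂ ≥ 1, parametrized by m₂ = p.2+1, m₁ = p.2+p.1+2. -/
noncomputable def zetaQ2 (q : ℝ) (k₁ k₂ : ℕ) : ℝ :=
  ∑' p : ℕ × ℕ,
    q ^ ((k₁ - 1) * (p.2 + p.1 + 2) + (k₂ - 1) * (p.2 + 1)) /
      ((qint q (p.2 + p.1 + 2)) ^ k₁ * (qint q (p.2 + 1)) ^ k₂)

/-- Depth-two qMZSV: sum over m₁ ≥ m₂ ≥ 1, parametrized by m₂ = p.2+1, m₁ = p.2+p.1+1. -/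
noncomputable def zetaQStar2 (q : ℝ) (k₁ k₂ : ℕ) : ℝ :=
  ∑' p : ℕ × ℕ,
    q ^ ((k₁ - 1) * (p.2 + p.1 + 1) + (k₂ - 1) * (p.2 + 1)) /
      ((qint q (p.2 + p.1 + 1)) ^ k₁ * (qint q (p.2 + 1)) ^ k₂)

/-- Interpolated q-double zeta value. -/
noncomputable def zetaQT (q t : ℝ) (k₁ k₂ : ℕ) : ℝ :=
  zetaQ2 q k₁ k₂ + t * (zetaQ q (k₁ + k₂) + (1 - q) * zetaQ q (k₁ + k₂ - 1))


/-! Write `x_m = qterm q m = q^m/[m]`. For fixed `m₁ > m₂` the terms of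
`∑_j ζ_q(k-j, j+1)` form a geometric sum in `x_{m₁}` and `x_{m₂}`. Since `1/[m] = x_m + (1 - q)`
and `[m₁] - [m₂] = q^{m₂}[m₁-m₂]`, it equals `A - B` with
`A = x_{m₂}^{k-1}/[m₂] · (1/[m₁-m₂] - 1/[m₁])` and `B = x_{m₁-m₂} · x_{m₁}^{k-1}/[m₁]`.
Summing `A` over `m₁` telescopes to `x_{m₂}^{k-1}/[m₂] · ∑_{i ≤ m₂} x_i`, summing `B` over `m₂`
gives `x_{m₁}^{k-1}/[m₁] · ∑_{i < m₁} x_i`, and the difference is `∑_m x_m^k/[m] = ζ_q(k+1)`.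
The interpolation terms of `ζ_q^t(k-j, j+1)` depend only on the weight `k+1`.
Below, a pair `m₁ > m₂ ≥ 1` is indexed by `p : ℕ × ℕ` with `m₂ = p.1 + 1`, `m₁ - m₂ = p.2 + 1`. -/

open Finset

theorem HasSum.sum_antidiagonal {A α : Type*} [AddCommMonoid A] [HasAntidiagonal A]
    [AddCommMonoid α] [TopologicalSpace α] [RegularSpace α] [ContinuousAdd α]
    {f : A × A → α} {a : α} (hf : HasSum f a) :
    HasSum (fun n ↦ ∑ p ∈ antidiagonal n, f p) a :=
  (HasAntidiagonal.sigmaAntidiagonalEquivProd.hasSum_iff.2 hf).sigma fun n ↦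
    (antidiagonal n).hasSum f

theorem HasSum.sum_range_mul_of_prod {R : Type*} [NonUnitalNonAssocSemiring R]
    [TopologicalSpace R] [RegularSpace R] [ContinuousAdd R] {f g : ℕ → R} {a : R}
    (h : HasSum (fun p : ℕ × ℕ ↦ f p.2 * g (p.1 + p.2)) a) :
    HasSum (fun n ↦ (∑ i ∈ range (n + 1), f i) * g n) a := by
  refine h.sum_antidiagonal.congr_fun fun n ↦ ?_
  have hswap : ∑ p ∈ antidiagonal n, f p.2 = ∑ i ∈ range (n + 1), f i := by
    rw [← Nat.sum_antidiagonal_swap, Nat.sum_antidiagonal_eq_sum_range_succ_mk]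
    rfl
  rw [← hswap, sum_mul]
  exact sum_congr rfl fun p hp ↦ by rw [HasAntidiagonal.mem_antidiagonal.1 hp]

theorem Summable.hasSum_sub_nat_add {G : Type*} [AddCommGroup G] [TopologicalSpace G]
    [IsTopologicalAddGroup G] {f : ℕ → G} (hf : Summable f) (k : ℕ) :
    HasSum (fun n ↦ f n - f (n + k)) (∑ i ∈ range k, f i) := by
  simpa using hf.hasSum.sub ((hasSum_nat_add_iff' k).2 hf.hasSum)

theorem sum_range_pow_mul_pow_mul_sub {R : Type*} [CommRing R] (x y : R) (n : ℕ) :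
    (∑ j ∈ range n, x ^ (n - j) * y ^ j) * (y - x) = x * (y ^ n - x ^ n) := by
  rw [← geom_sum₂_mul, ← mul_assoc, mul_sum]
  congr 1
  refine sum_congr rfl fun j hj ↦ ?_
  rw [show n - j = n - 1 - j + 1 by have := mem_range.1 hj; omega]
  ring

section QZeta

variable {q : ℝ}

theorem qint_eq_sum_range (hq : q ≠ 1) (m : ℕ) : qint q m = ∑ i ∈ range m, q ^ i := by
  rw [qint, geom_sum_eq hq, ← neg_sub q, ← neg_sub (q ^ m), neg_div_neg_eq]

theorem one_le_qint (hq0 : 0 ≤ q) (hq1 : q ≠ 1) {m : ℕ} (hm : m ≠ 0) : 1 ≤ qint q m := by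
  obtain ⟨m, rfl⟩ := Nat.exists_eq_succ_of_ne_zero hm
  rw [qint_eq_sum_range hq1, sum_range_succ', pow_zero, le_add_iff_nonneg_left]
  exact sum_nonneg fun i _ ↦ pow_nonneg hq0 _

theorem qint_pos (hq0 : 0 ≤ q) (hq1 : q ≠ 1) {m : ℕ} (hm : m ≠ 0) : 0 < qint q m :=
  one_pos.trans_le (one_le_qint hq0 hq1 hm)

theorem qint_add (hq : q ≠ 1) (m n : ℕ) : qint q (m + n) = qint q m + q ^ m * qint q n := by
  have : 1 - q ≠ 0 := sub_ne_zero.2 hq.symm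
  simp only [qint, pow_add]
  field_simp
  ring

theorem one_div_qint_sub_one_div_qint_add (hq0 : 0 ≤ q) (hq1 : q ≠ 1) {m : ℕ} (hm : m ≠ 0)
    (n : ℕ) :
    1 / qint q m - 1 / qint q (m + n) = q ^ m * qint q n / (qint q m * qint q (m + n)) := by
  rw [div_sub_div _ _ (qint_pos hq0 hq1 hm).ne' (qint_pos hq0 hq1 (by omega)).ne', qint_add hq1]
  ring

noncomputable def qterm (q : ℝ) (m : ℕ) : ℝ := q ^ m / qint q m

theorem one_div_qint_eq_qterm_add (hq0 : 0 ≤ q) (hq1 : q ≠ 1) {m : ℕ} (hm : m ≠ 0) :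
    1 / qint q m = qterm q m + (1 - q) := by
  have hqint : (1 - q) * qint q m = 1 - q ^ m := by
    have : 1 - q ≠ 0 := sub_ne_zero.2 hq1.symm
    rw [qint]
    field_simp
  rw [qterm, div_add' _ _ _ (qint_pos hq0 hq1 hm).ne', hqint]
  ring

theorem qterm_nonneg (hq0 : 0 ≤ q) (hq1 : q ≤ 1) (m : ℕ) : 0 ≤ qterm q m :=
  div_nonneg (pow_nonneg hq0 m) (div_nonneg (sub_nonneg.2 (pow_le_one₀ hq0 hq1)) (by linarith))

theorem qterm_le_pow (hq0 : 0 ≤ q) (hq1 : q < 1) (m : ℕ) : qterm q m ≤ q ^ m := by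
  rcases eq_or_ne m 0 with rfl | hm
  · simp [qterm, qint]
  · exact div_le_self (pow_nonneg hq0 m) (one_le_qint hq0 hq1.ne hm)

theorem qterm_le_one (hq0 : 0 ≤ q) (hq1 : q < 1) (m : ℕ) : qterm q m ≤ 1 :=
  (qterm_le_pow hq0 hq1 m).trans (pow_le_one₀ hq0 hq1.le)

theorem summable_qterm (hq0 : 0 ≤ q) (hq1 : q < 1) : Summable (qterm q) :=
  (summable_geometric_of_lt_one hq0 hq1).of_nonneg_of_le (qterm_nonneg hq0 hq1.le)
    (qterm_le_pow hq0 hq1)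

theorem hasSum_one_div_qint_sub_one_div_qint_add (hq0 : 0 ≤ q) (hq1 : q < 1) (m : ℕ) :
    HasSum (fun n ↦ 1 / qint q (n + 1) - 1 / qint q (m + (n + 1)))
      (∑ i ∈ range m, qterm q (i + 1)) := by
  refine (((summable_nat_add_iff 1).2 (summable_qterm hq0 hq1)).hasSum_sub_nat_add m).congr_fun
    fun n ↦ ?_
  rw [one_div_qint_eq_qterm_add hq0 hq1.ne n.succ_ne_zero,
    one_div_qint_eq_qterm_add hq0 hq1.ne (by omega), show m + (n + 1) = n + m + 1 by omega]
  ring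

theorem zetaQ_succ (k : ℕ) :
    zetaQ q (k + 1) = ∑' m : ℕ, qterm q (m + 1) ^ k / qint q (m + 1) := by
  simp only [zetaQ, qterm, Nat.add_sub_cancel, div_pow]
  congr! 2 with m
  ring

theorem zetaQ2_succ_succ (k₁ k₂ : ℕ) :
    zetaQ2 q (k₁ + 1) (k₂ + 1) = ∑' p : ℕ × ℕ, qterm q (p.1 + 1 + (p.2 + 1)) ^ k₁ *
      qterm q (p.1 + 1) ^ k₂ / (qint q (p.1 + 1 + (p.2 + 1)) * qint q (p.1 + 1)) := by
  rw [zetaQ2, ← (Equiv.prodComm ℕ ℕ).tsum_eq]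
  congr! 2 with ⟨m, n⟩
  simp only [Equiv.prodComm_apply, Prod.swap, qterm, Nat.add_sub_cancel, div_pow,
    show m + 1 + (n + 1) = m + n + 2 by omega]
  ring

theorem summable_of_mem_Icc_qterm (hq0 : 0 ≤ q) (hq1 : q < 1) {f : ℕ × ℕ → ℝ}
    (hf : ∀ p, f p ∈ Set.Icc 0 (qterm q (p.1 + 1 + (p.2 + 1)))) : Summable f := by
  have hgeom : Summable fun n : ℕ ↦ q ^ (n + 1) :=
    (summable_nat_add_iff 1).2 (summable_geometric_of_lt_one hq0 hq1)
  refine (hgeom.mul_of_nonneg hgeom (fun _ ↦ by positivity) fun _ ↦ by positivity).of_nonneg_of_le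
    (fun p ↦ (hf p).1) fun p ↦ ?_
  exact (hf p).2.trans ((qterm_le_pow hq0 hq1 _).trans_eq (pow_add ..))

theorem summable_qterm_pow_mul_qterm_pow_div (hq0 : 0 ≤ q) (hq1 : q < 1) {i : ℕ} (hi : i ≠ 0)
    (j : ℕ) : Summable fun p : ℕ × ℕ ↦ qterm q (p.1 + 1 + (p.2 + 1)) ^ i *
      qterm q (p.1 + 1) ^ j / (qint q (p.1 + 1 + (p.2 + 1)) * qint q (p.1 + 1)) := by
  refine summable_of_mem_Icc_qterm hq0 hq1 fun p ↦ ?_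
  have hx0 := qterm_nonneg hq0 hq1.le (p.1 + 1 + (p.2 + 1))
  have hx1 := qterm_le_one hq0 hq1 (p.1 + 1 + (p.2 + 1))
  have hy0 := qterm_nonneg hq0 hq1.le (p.1 + 1)
  have hy1 := qterm_le_one hq0 hq1 (p.1 + 1)
  have := one_le_qint hq0 hq1.ne (m := p.1 + 1 + (p.2 + 1)) (by omega)
  have := one_le_qint hq0 hq1.ne (m := p.1 + 1) (by omega)
  refine ⟨by positivity, ?_⟩
  calc _ ≤ qterm q (p.1 + 1 + (p.2 + 1)) ^ i * qterm q (p.1 + 1) ^ j := by bound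
    _ ≤ qterm q (p.1 + 1 + (p.2 + 1)) * 1 := by
      gcongr
      · exact pow_le_of_le_one hx0 hx1 hi
      · exact pow_le_one₀ hy0 hy1
    _ = _ := mul_one _

theorem summable_qterm_mul_qterm_pow_div (hq0 : 0 ≤ q) (hq1 : q < 1) {i : ℕ} (hi : i ≠ 0) :
    Summable fun p : ℕ × ℕ ↦ qterm q (p.2 + 1) *
      (qterm q (p.1 + 1 + (p.2 + 1)) ^ i / qint q (p.1 + 1 + (p.2 + 1))) := by
  refine summable_of_mem_Icc_qterm hq0 hq1 fun p ↦ ?_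
  have hx0 := qterm_nonneg hq0 hq1.le (p.1 + 1 + (p.2 + 1))
  have hx1 := qterm_le_one hq0 hq1 (p.1 + 1 + (p.2 + 1))
  have := qterm_nonneg hq0 hq1.le (p.2 + 1)
  have := qterm_le_one hq0 hq1 (p.2 + 1)
  have := one_le_qint hq0 hq1.ne (m := p.1 + 1 + (p.2 + 1)) (by omega)
  refine ⟨by positivity, ?_⟩
  calc _ ≤ 1 * qterm q (p.1 + 1 + (p.2 + 1)) ^ i := by bound
    _ ≤ qterm q (p.1 + 1 + (p.2 + 1)) := by
      rw [one_mul]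
      exact pow_le_of_le_one hx0 hx1 hi

theorem sum_range_qterm_pow_mul_qterm_pow (hq0 : 0 < q) (hq1 : q < 1) (k : ℕ) {m n : ℕ}
    (hm : m ≠ 0) (hn : n ≠ 0) :
    ∑ j ∈ range (k + 1), qterm q (m + n) ^ (k + 1 - j) * qterm q m ^ j /
        (qint q (m + n) * qint q m) =
      qterm q m ^ (k + 1) / qint q m * (1 / qint q n - 1 / qint q (m + n)) -
        qterm q n * (qterm q (m + n) ^ (k + 1) / qint q (m + n)) := by
  have hmn : m + n ≠ 0 := by omega
  have hgap : 1 / qint q n - 1 / qint q (m + n) =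
      q ^ n * qint q m / (qint q n * qint q (m + n)) := by
    rw [add_comm m n]
    exact one_div_qint_sub_one_div_qint_add hq0.le hq1.ne hn m
  set X := qterm q (m + n) with hX
  set Y := qterm q m
  have hYX : Y - X = q ^ m * qint q n / (qint q m * qint q (m + n)) := by
    rw [← one_div_qint_sub_one_div_qint_add hq0.le hq1.ne hm,
      one_div_qint_eq_qterm_add hq0.le hq1.ne hm, one_div_qint_eq_qterm_add hq0.le hq1.ne hmn]
    ring
  have hm' := qint_pos hq0.le hq1.ne hm
  have hn' := qint_pos hq0.le hq1.ne hn
  have hmn' := qint_pos hq0.le hq1.ne hmn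
  have hXq : X * qint q (m + n) = q ^ m * q ^ n := by
    rw [hX, qterm, pow_add, div_mul_cancel₀ _ hmn'.ne']
  have hS : (∑ j ∈ range (k + 1), X ^ (k + 1 - j) * Y ^ j) * qint q n =
      q ^ n * qint q m * (Y ^ (k + 1) - X ^ (k + 1)) := by
    have hgeom := sum_range_pow_mul_pow_mul_sub X Y (k + 1)
    rw [hYX] at hgeom
    field_simp at hgeom
    apply mul_left_cancel₀ (pow_pos hq0 m).ne'
    linear_combination hgeom + (Y ^ (k + 1) - X ^ (k + 1)) * qint q m * hXq
  rw [← sum_div, hgap, qterm]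
  field_simp
  linear_combination hS

theorem hasSum_sum_range_zetaQ2 (hq0 : 0 ≤ q) (hq1 : q < 1) (k : ℕ) :
    HasSum (fun p : ℕ × ℕ ↦ ∑ j ∈ range (k + 1), qterm q (p.1 + 1 + (p.2 + 1)) ^ (k + 1 - j) *
        qterm q (p.1 + 1) ^ j / (qint q (p.1 + 1 + (p.2 + 1)) * qint q (p.1 + 1)))
      (∑ j ∈ range (k + 1), zetaQ2 q (k + 2 - j) (j + 1)) := by
  refine hasSum_sum fun j hj ↦ ?_
  have hj : j < k + 1 := mem_range.1 hj
  rw [show k + 2 - j = k + 1 - j + 1 by omega, zetaQ2_succ_succ]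
  exact (summable_qterm_pow_mul_qterm_pow_div hq0 hq1 (by omega) j).hasSum

theorem sum_range_zetaQ2_eq_zetaQ (hq0 : 0 < q) (hq1 : q < 1) (k : ℕ) :
    ∑ j ∈ range (k + 1), zetaQ2 q (k + 2 - j) (j + 1) = zetaQ q (k + 3) := by
  let G : ℕ → ℝ := fun m ↦ qterm q m ^ (k + 1) / qint q m
  let S : ℕ → ℝ := fun r ↦ ∑ i ∈ range r, qterm q (i + 1)
  let B : ℕ × ℕ → ℝ := fun p ↦ qterm q (p.2 + 1) * G (p.1 + 1 + (p.2 + 1))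
  have hB : Summable B := summable_qterm_mul_qterm_pow_div hq0.le hq1 k.succ_ne_zero
  have hA : HasSum (fun p : ℕ × ℕ ↦
      G (p.1 + 1) * (1 / qint q (p.2 + 1) - 1 / qint q (p.1 + 1 + (p.2 + 1))))
      (∑ j ∈ range (k + 1), zetaQ2 q (k + 2 - j) (j + 1) + ∑' p, B p) := by
    refine ((hasSum_sum_range_zetaQ2 hq0.le hq1 k).add hB.hasSum).congr_fun fun p ↦ ?_
    rw [sum_range_qterm_pow_mul_qterm_pow hq0 hq1 k p.1.succ_ne_zero p.2.succ_ne_zero]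
    ring
  have hAfib : HasSum (fun m ↦ G (m + 1) * S (m + 1))
      (∑ j ∈ range (k + 1), zetaQ2 q (k + 2 - j) (j + 1) + ∑' p, B p) :=
    hA.prod_fiberwise fun m ↦
      (hasSum_one_div_qint_sub_one_div_qint_add hq0.le hq1 (m + 1)).mul_left _
  have hBdiag : HasSum (fun m ↦ G (m + 1) * S m) (∑' p, B p) := by
    refine (hasSum_nat_add_iff' 1).1 ?_
    simp only [range_one, sum_singleton, S, range_zero, sum_empty, mul_zero, sub_zero]
    refine (HasSum.sum_range_mul_of_prod (f := fun i ↦ qterm q (i + 1))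
      (g := fun n ↦ G (n + 2)) ?_).congr_fun fun n ↦ mul_comm _ _
    exact hB.hasSum.congr_fun fun p ↦ by
      simp only [B, show p.1 + 1 + (p.2 + 1) = p.1 + p.2 + 2 by omega]
  have hdiff := hAfib.sub hBdiag
  rw [add_sub_cancel_right] at hdiff
  rw [zetaQ_succ]
  refine (hdiff.congr_fun fun m ↦ ?_).tsum_eq.symm
  simp only [G, S, sum_range_succ]
  ring

end QZeta

theorem stmt_17 (q t : ℝ) (hq0 : 0 < q) (hq1 : q < 1) (k : ℕ) (hk : 2 ≤ k) :
    ∑ j ∈ Finset.range (k - 1), zetaQT q t (k - j) (j + 1) =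
      (1 + ((k : ℝ) - 1) * t) * zetaQ q (k + 1) +
        t * ((k : ℝ) - 1) * (1 - q) * zetaQ q k := by
  obtain ⟨k, rfl⟩ : ∃ k', k = k' + 2 := ⟨k - 2, by omega⟩
  have hzetaQT : ∀ j ∈ range (k + 1), zetaQT q t (k + 2 - j) (j + 1) =
      zetaQ2 q (k + 2 - j) (j + 1) + t * (zetaQ q (k + 3) + (1 - q) * zetaQ q (k + 2)) := by
    intro j hj
    have hj : j < k + 1 := mem_range.1 hj
    rw [zetaQT, show k + 2 - j + (j + 1) = k + 3 by omega, show k + 3 - 1 = k + 2 by omega]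
  rw [show k + 2 - 1 = k + 1 by omega, sum_congr rfl hzetaQT, sum_add_distrib,
    sum_range_zetaQ2_eq_zetaQ hq0 hq1 k, sum_const, card_range, nsmul_eq_mul]
  push_cast
  ring
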